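/- With β₀ = 1/2^d and β_r = −(−1/2)^{d−r}·C(d,r) for r = 1,...,d−1, for every x ∈ [0,1]^d the quantity max_i x_i − β₀ − Σ_{r=1}^{d−1} β_r S_r(x) lies in the interval [−1/2^d, 1/2^d], and equality |error| = 1/2^d is attained at x = 0. -/

import Mathlib

/-!
Both `max` and every `S_r` are symmetric, so `x` may be assumed increasing. Then the maximum
over an `r`-set is `x_k` for its largest index `k`, whence `C(d, r) S_r(x) = ∑_k C(k, r-1) x_k`,
and the binomial theorem `(1 - 1/2)^k = 2^{-k}` collapses the error to
`2^{-d} (2 ∑_k (-1)^{d-1-k} x_k - 1)`. The alternating sum `x_{d-1} - x_{d-2} + ⋯` of an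
increasing sequence in `[0, 1]` lies in `[0, 1]`.
-/

open Finset

variable {ι : Type*}

/-- The junk value `0` on `∅` never matters: only nonempty sets occur. -/
noncomputable def maxOver (R : Finset ι) (x : ι → ℝ) : ℝ :=
  if h : R.Nonempty then R.sup' h x else 0

/-- `sumMax r x = C(d, r) * S_r(x)`. -/
noncomputable def sumMax [Fintype ι] (r : ℕ) (x : ι → ℝ) : ℝ :=
  ∑ R ∈ powersetCard r univ, maxOver R x

lemma maxOver_eq_sup' {R : Finset ι} (h : R.Nonempty) (x : ι → ℝ) :
    maxOver R x = R.sup' h x :=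
  dif_pos h

lemma maxOver_map {κ : Type*} (R : Finset κ) (f : κ ↪ ι) (x : ι → ℝ) :
    maxOver (R.map f) x = maxOver R (x ∘ f) := by
  simp [maxOver, sup'_map]

lemma maxOver_eq_of_monotone [LinearOrder ι] {x : ι → ℝ} (hx : Monotone x) {R : Finset ι}
    (h : R.Nonempty) : maxOver R x = x (R.max' h) := by
  rw [maxOver_eq_sup' h, max'_eq_sup', apply_sup'_eq_sup'_comp h x fun _ _ => hx.map_max]
  rfl

section Fintype

variable [Fintype ι]

lemma sum_attach_sup'_eq_sumMax (r : ℕ) (x : ι → ℝ)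
    (h : ∀ R : {R // R ∈ powersetCard r (univ : Finset ι)}, R.1.Nonempty) :
    ∑ R ∈ (powersetCard r univ).attach, R.1.sup' (h R) x = sumMax r x := by
  rw [sumMax, ← sum_attach (powersetCard r univ) (maxOver · x)]
  exact sum_congr rfl fun R _ => (maxOver_eq_sup' _ x).symm

lemma sup'_univ_eq_sumMax (x : ι → ℝ) (h : (univ : Finset ι).Nonempty) :
    univ.sup' h x = sumMax (Fintype.card ι) x := by
  rw [sumMax, ← card_univ, powersetCard_self, sum_singleton, maxOver_eq_sup' h]

lemma sumMax_comp_equiv (r : ℕ) (x : ι → ℝ) (σ : ι ≃ ι) : sumMax r (x ∘ σ) = sumMax r x := by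
  conv_rhs => rw [sumMax, ← map_univ_equiv σ, powersetCard_map, sum_map]
  simp [sumMax, maxOver_map]

/-- An `(r + 1)`-set with largest element `k` is `k` together with an `r`-subset of `Iio k`. -/
lemma sumMax_succ_of_monotone [LinearOrder ι] [LocallyFiniteOrderBot ι] {x : ι → ℝ}
    (hx : Monotone x) (r : ℕ) :
    sumMax (r + 1) x = ∑ k, ((#(Iio k)).choose r : ℝ) * x k := by
  have hcount (k : ι) :
      ((#(Iio k)).choose r : ℝ) * x k = ∑ _T ∈ powersetCard r (Iio k), x k := by
    rw [sum_const, card_powersetCard, nsmul_eq_mul]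
  have hne {R : Finset ι} (hR : R ∈ powersetCard (r + 1) univ) : R.Nonempty :=
    card_pos.mp (by rw [(mem_powersetCard.mp hR).2]; omega)
  simp_rw [hcount]
  rw [sumMax, sum_sigma']
  refine sum_bij' (fun R hR => ⟨R.max' (hne hR), R.erase (R.max' (hne hR))⟩)
    (fun p _ => insert p.1 p.2) ?_ ?_ ?_ ?_ ?_
  · intro R hR
    simp only [mem_sigma, mem_univ, true_and, mem_powersetCard]
    refine ⟨fun j hj => mem_Iio.mpr (lt_max'_of_mem_erase_max' _ _ hj), ?_⟩
    rw [card_erase_of_mem (max'_mem _ _), (mem_powersetCard.mp hR).2, Nat.add_sub_cancel]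
  · rintro ⟨k, T⟩ hT
    simp only [mem_sigma, mem_univ, true_and, mem_powersetCard] at hT ⊢
    have hk : k ∉ T := fun h => lt_irrefl k (mem_Iio.mp (hT.1 h))
    exact ⟨subset_univ _, by rw [card_insert_of_notMem hk, hT.2]⟩
  · intro R hR
    exact insert_erase (max'_mem _ (hne hR))
  · rintro ⟨k, T⟩ hT
    simp only [mem_sigma, mem_univ, true_and, mem_powersetCard] at hT
    have hk : k ∉ T := fun h => lt_irrefl k (mem_Iio.mp (hT.1 h))
    have hmax : (insert k T).max' (insert_nonempty k T) = k :=
      le_antisymm (max'_le _ _ _ fun j hj => (mem_insert.mp hj).elim le_of_eq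
        fun h => (mem_Iio.mp (hT.1 h)).le) (le_max' _ _ (mem_insert_self k T))
    simp only [hmax, erase_insert hk]
  · intro R hR
    exact maxOver_eq_of_monotone hx (hne hR)

end Fintype

lemma sum_range_neg_half_pow_mul_choose {k n : ℕ} (hk : k ≤ n) :
    ∑ s ∈ range (n + 1), (-(1 / 2) : ℝ) ^ (n - s) * k.choose s
      = (-1) ^ (n - k) * (1 / 2) ^ n := by
  have hterm (s : ℕ) : (-(1 / 2) : ℝ) ^ (n - s) * k.choose s
      = (-(1 / 2)) ^ (n - k) * (1 ^ s * (-(1 / 2)) ^ (k - s) * k.choose s) := by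
    rcases le_or_gt s k with hs | hs
    · rw [one_pow, one_mul, ← mul_assoc, ← pow_add, Nat.sub_add_sub_cancel hk hs]
    · simp [Nat.choose_eq_zero_of_lt hs]
  have hvanish : ∑ s ∈ range (n + 1), (1 : ℝ) ^ s * (-(1 / 2)) ^ (k - s) * k.choose s
      = ∑ s ∈ range (k + 1), (1 : ℝ) ^ s * (-(1 / 2)) ^ (k - s) * k.choose s := by
    refine (sum_subset (range_subset_range.mpr (by omega)) fun s _ hs => ?_).symm
    simp [Nat.choose_eq_zero_of_lt (by simpa using hs : k < s)]
  rw [sum_congr rfl fun s _ => hterm s, ← mul_sum, hvanish, ← add_pow, neg_pow,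
    ← Nat.sub_add_cancel hk]
  norm_num [pow_add]
  ring

lemma sum_neg_half_pow_mul_sumMax_of_monotone {n : ℕ} {x : Fin (n + 1) → ℝ} (hx : Monotone x) :
    ∑ r ∈ range (n + 1), (-(1 / 2) : ℝ) ^ (n - r) * sumMax (r + 1) x
      = (1 / 2) ^ n * ∑ k : Fin (n + 1), (-1) ^ (n - (k : ℕ)) * x k := by
  simp_rw [sumMax_succ_of_monotone hx, Fin.card_Iio, mul_sum]
  rw [sum_comm]
  refine sum_congr rfl fun k _ => ?_
  simp_rw [← mul_assoc, ← sum_mul, sum_range_neg_half_pow_mul_choose k.is_le]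
  ring

lemma sum_neg_one_pow_mul_mem_Icc_of_monotone {n : ℕ} {y : Fin (n + 1) → ℝ} (hy : Monotone y)
    (h0 : 0 ≤ y 0) :
    ∑ k : Fin (n + 1), (-1 : ℝ) ^ (n - (k : ℕ)) * y k ∈ Set.Icc 0 (y (Fin.last n)) := by
  induction n with
  | zero => simpa using h0
  | succ n ih =>
    obtain ⟨hlow, hup⟩ :=
      ih (y := y ∘ Fin.castSucc) (hy.comp Fin.strictMono_castSucc.monotone) h0
    have hflip (k : Fin (n + 1)) :
        (-1 : ℝ) ^ (n + 1 - (k.castSucc : ℕ)) = -(-1) ^ (n - (k : ℕ)) := by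
      rw [Fin.val_castSucc, Nat.sub_add_comm k.is_le, pow_succ, mul_neg_one]
    have hstep : y (Fin.last n).castSucc ≤ y (Fin.last (n + 1)) :=
      hy (Fin.castSucc_lt_last _).le
    rw [Fin.sum_univ_castSucc]
    simp only [hflip, neg_mul, sum_neg_distrib, Fin.val_last, Nat.sub_self, pow_zero, one_mul]
    simp only [Function.comp_apply] at hlow hup
    constructor <;> linarith

theorem stmt9 (d : ℕ) (hd : 2 ≤ d)
    (S : ℕ → (Fin d → ℝ) → ℝ)
    (hS : ∀ (r : ℕ) (hr : 1 ≤ r) (hrd : r ≤ d) (x : Fin d → ℝ),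
      S r x = (1 / (d.choose r) : ℝ) *
        ∑ R ∈ (Finset.powersetCard r (Finset.univ : Finset (Fin d))).attach,
          R.1.sup' (Finset.card_pos.mp (by
            rw [(Finset.mem_powersetCard.mp R.2).2]; exact hr)) x)
    (β₀ : ℝ) (hβ₀ : β₀ = 1 / 2 ^ d)
    (β : ℕ → ℝ) (hβ : ∀ r, 1 ≤ r → r ≤ d - 1 → β r = -((-(1 / 2) : ℝ) ^ (d - r) * d.choose r))
    (err : (Fin d → ℝ) → ℝ)
    (herr : ∀ x, err x = Finset.univ.sup' (Finset.univ_nonempty_iff.mpr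
          (Fin.pos_iff_nonempty.mp (by omega))) x
        - β₀ - ∑ r ∈ Finset.Icc 1 (d - 1), β r * S r x) :
    (∀ x : Fin d → ℝ, (∀ i, x i ∈ Set.Icc (0 : ℝ) 1) →
        err x ∈ Set.Icc (-(1 / 2 ^ d) : ℝ) (1 / 2 ^ d)) ∧
      |err (fun _ => 0)| = 1 / 2 ^ d := by
  obtain ⟨n, rfl⟩ : ∃ n, d = n + 1 := ⟨d - 1, by omega⟩
  have hterm (x : Fin (n + 1) → ℝ) (r : ℕ) (hr : r ∈ range n) :
      β (1 + r) * S (1 + r) x = -((-(1 / 2) : ℝ) ^ (n - r) * sumMax (r + 1) x) := by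
    have hrn : r < n := mem_range.mp hr
    have hchoose : ((n + 1).choose (r + 1) : ℝ) ≠ 0 := by
      exact_mod_cast (Nat.choose_pos (by omega)).ne'
    rw [add_comm 1 r, hβ _ (by omega) (by omega), hS _ (by omega) (by omega),
      sum_attach_sup'_eq_sumMax, Nat.add_sub_add_right]
    field_simp
  have hsum (x : Fin (n + 1) → ℝ) : err x = -(1 / 2 ^ (n + 1))
      + ∑ r ∈ range (n + 1), (-(1 / 2) : ℝ) ^ (n - r) * sumMax (r + 1) x := by
    rw [herr, hβ₀, sup'_univ_eq_sumMax, Fintype.card_fin, Nat.add_sub_cancel,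
      ← Ico_add_one_right_eq_Icc, sum_Ico_eq_sum_range, Nat.add_sub_cancel,
      sum_congr rfl (hterm x), sum_neg_distrib, sum_range_succ, Nat.sub_self, pow_zero, one_mul]
    ring
  have hsorted (x : Fin (n + 1) → ℝ) (hx : Monotone x) : err x
      = 1 / 2 ^ (n + 1) * (2 * ∑ k : Fin (n + 1), (-1) ^ (n - (k : ℕ)) * x k - 1) := by
    rw [hsum, sum_neg_half_pow_mul_sumMax_of_monotone hx, one_div_pow, pow_succ]
    field_simp
    ring
  refine ⟨fun x hx => ?_, ?_⟩
  · have hperm : err x = err (x ∘ Tuple.sort x) := by simp only [hsum, sumMax_comp_equiv]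
    obtain ⟨hlow, hup⟩ :=
      sum_neg_one_pow_mul_mem_Icc_of_monotone (Tuple.monotone_sort x) (hx _).1
    have hone : (x ∘ Tuple.sort x) (Fin.last n) ≤ 1 := (hx _).2
    have hc : (0 : ℝ) < 1 / 2 ^ (n + 1) := by positivity
    rw [hperm, hsorted _ (Tuple.monotone_sort x)]
    constructor <;> nlinarith
  · rw [hsorted _ monotone_const]
    simp
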